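/- Let G be a d-weighted reachability game, let ≲ be the lexicographic order ≤_L on (ℕ ∪ {∞})^d, let u be a vertex, and let c ∈ minimal(Ensure(u)) with c ≠ (∞,…,∞). Then there exists a positional strategy σ₁ of Player 1 from u (i.e., σ₁(hv) = σ₁(h'v) whenever the histories hv and h'v end in the same vertex v) such that Cost(Out(σ₁,σ₂,u)) ≤_L c for every strategy σ₂ of Player 2. In other words, positional lexico-optimal strategies exist. -/

import Mathlib

open Classical

/-- Cost profiles: `d`-tuples over `ℕ ∪ {∞}`. -/
abbrev CostP (d : ℕ) := Fin d → ℕ∞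

/-- The componentwise order `≤_C` on `(ℕ ∪ {∞})^d`. -/
def leC {d : ℕ} (x y : CostP d) : Prop := x ≤ y

/-- The strict lexicographic order `<_L` on `(ℕ ∪ {∞})^d`. -/
def ltL {d : ℕ} (x y : CostP d) : Prop :=
  ∃ i, (∀ j, j < i → x j = y j) ∧ x i < y i

/-- The lexicographic order `≤_L` on `(ℕ ∪ {∞})^d`. -/
def leL {d : ℕ} (x y : CostP d) : Prop := x = y ∨ ltL x y

/-- Minimal elements of `X` with respect to an order `le`. -/
def minimalSet {α : Type*} (le : α → α → Prop) (X : Set α) : Set α :=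
  { x | x ∈ X ∧ ∀ y ∈ X, le y x → y = x }

/-- Upward closure of `X` with respect to an order `le`. -/
def upSet {α : Type*} (le : α → α → Prop) (X : Set α) : Set α :=
  { z | ∃ x ∈ X, le x z }

/-- Translation of a set of cost profiles by (the cast of) a tuple `c ∈ ℕ^d`. -/
def addW {d : ℕ} (X : Set (CostP d)) (c : Fin d → ℕ) : Set (CostP d) :=
  { z | ∃ x ∈ X, z = x + fun i => (c i : ℕ∞) }

/-- A `d`-weighted reachability game: a finite directed graph whose vertices are
partitioned into Player 1's vertices `V1` and Player 2's vertices (the complement),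
an edge relation `E` such that every vertex has a successor, a `d`-dimensional
weight function `w` on edges, and a target set `F`. -/
structure MWGame (V : Type*) (d : ℕ) where
  V1 : Set V
  E : V → V → Prop
  succ_nonempty : ∀ v, ∃ v', E v v'
  w : V → V → Fin d → ℕ
  F : Set V

namespace MWGame

variable {V : Type*} {d : ℕ}

/-- Strategies of Player 1: a choice of successor for every history
(represented as the pair (strict past, current vertex)), valid at Player 1's vertices. -/
def Strat1 (G : MWGame V d) :=
  { σ : List V → V → V // ∀ h u, u ∈ G.V1 → G.E u (σ h u) }

/-- Strategies of Player 2. -/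
def Strat2 (G : MWGame V d) :=
  { σ : List V → V → V // ∀ h u, u ∉ G.V1 → G.E u (σ h u) }

/-- The pair (strict past, current vertex) after `n` steps of the play consistent
with `σ₁` and `σ₂` from `v`. -/
noncomputable def outAux (G : MWGame V d) (σ₁ : G.Strat1) (σ₂ : G.Strat2) (v : V) :
    ℕ → List V × V
  | 0 => ([], v)
  | n + 1 =>
    let q := G.outAux σ₁ σ₂ v n
    (q.1 ++ [q.2], if q.2 ∈ G.V1 then σ₁.1 q.1 q.2 else σ₂.1 q.1 q.2)

/-- `Out(σ₁,σ₂,v)`: the unique play from `v` consistent with `σ₁` and `σ₂`. -/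
noncomputable def out (G : MWGame V d) (σ₁ : G.Strat1) (σ₂ : G.Strat2) (v : V) (n : ℕ) : V :=
  (G.outAux σ₁ σ₂ v n).2

/-- The cost profile of a play: the componentwise sum of weights up to the first
visit of the target set, and `(∞,…,∞)` if the target set is never visited. -/
noncomputable def cost (G : MWGame V d) (ρ : ℕ → V) : CostP d :=
  if h : ∃ ℓ, ρ ℓ ∈ G.F then
    fun i => ∑ n ∈ Finset.range (Nat.find h), (G.w (ρ n) (ρ (n + 1)) i : ℕ∞)
  else ⊤

/-- `Ensure^k(v)`: cost profiles that Player 1 can ensure from `v` within `k` steps. -/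
def EnsureK (G : MWGame V d) (le : CostP d → CostP d → Prop) (k : ℕ) (v : V) :
    Set (CostP d) :=
  { x | ∃ σ₁ : G.Strat1, ∀ σ₂ : G.Strat2,
      le (G.cost (G.out σ₁ σ₂ v)) x ∧
      ∀ h : (∃ ℓ, G.out σ₁ σ₂ v ℓ ∈ G.F), Nat.find h ≤ k }

/-- `Ensure(v)`: cost profiles that Player 1 can ensure from `v`. -/
def Ensure (G : MWGame V d) (le : CostP d → CostP d → Prop) (v : V) : Set (CostP d) :=
  { x | ∃ σ₁ : G.Strat1, ∀ σ₂ : G.Strat2, le (G.cost (G.out σ₁ σ₂ v)) x }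

/-- The sets `Iᵏ(v)` computed by the fixpoint algorithm, relative to the order `le`. -/
noncomputable def Iset (G : MWGame V d) (le : CostP d → CostP d → Prop) :
    ℕ → V → Set (CostP d)
  | 0, v => if v ∈ G.F then {0} else {⊤}
  | k + 1, v =>
    if v ∈ G.F then {0}
    else if v ∈ G.V1 then
      minimalSet le (⋃ v' ∈ { u | G.E v u }, addW (upSet le (G.Iset le k v')) (G.w v v'))
    else
      minimalSet le (⋂ v' ∈ { u | G.E v u }, addW (upSet le (G.Iset le k v')) (G.w v v'))

end MWGame

/-!
Value iteration with the lexicographic Bellman operator (Player 1 takes the minimum, Player 2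
the maximum of `w(v,v') + f(v')` over the successors `v'`) is antitone, and since the
lexicographic order on `(ℕ ∪ {∞})^d` is a well-order it stabilises at a fixpoint `value`.
The rank of a vertex is the first iteration at which its value is reached.

If Player 2 always moves to a successor realising the value, `cost so far + value` never
decreases along the play, so every profile Player 1 can ensure from `u` is at least `value u`.
If Player 1 always moves to a successor realising the value with smaller rank, then at every step
the pair `(cost so far + value, rank)` decreases lexicographically; hence the target is reached,
at cost at most `value u ≤ c`, whatever Player 2 does.
-/

section LexAdd

variable {ι : Type*}

def lexAdd (a : ι → ℕ) (x : Lex (ι → ℕ∞)) : Lex (ι → ℕ∞) :=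
  toLex fun i => (a i : ℕ∞) + ofLex x i

lemma strictMono_lexAdd [LinearOrder ι] [WellFoundedLT ι] (a : ι → ℕ) :
    StrictMono (lexAdd a) := by
  intro x y hxy
  obtain ⟨i, heq, hlt⟩ := (hxy : Pi.Lex (· < ·) (· < ·) x y)
  exact ⟨i, fun j hj => congrArg ((a j : ℕ∞) + ·) (heq j hj),
    (ENat.add_lt_add_iff_left (ENat.natCast_ne_top _)).mpr hlt⟩

lemma lexAdd_zero (x : Lex (ι → ℕ∞)) : lexAdd 0 x = x :=
  congrArg toLex (funext fun _ => zero_add _)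

lemma lexAdd_add (a b : ι → ℕ) (x : Lex (ι → ℕ∞)) :
    lexAdd (a + b) x = lexAdd a (lexAdd b x) := by
  simp only [lexAdd, Pi.add_apply, Nat.cast_add, ofLex_toLex, add_assoc]

lemma lexAdd_top [LinearOrder ι] [WellFoundedLT ι] (a : ι → ℕ) : lexAdd a ⊤ = ⊤ :=
  congrArg toLex (funext fun _ => add_top _)

lemma ne_top_of_lexAdd_le [LinearOrder ι] [WellFoundedLT ι] {a : ι → ℕ}
    {x y : Lex (ι → ℕ∞)} (h : lexAdd a y ≤ x) (hx : x ≠ ⊤) : y ≠ ⊤ := by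
  rintro rfl
  rw [lexAdd_top, top_le_iff] at h
  exact hx h

end LexAdd

lemma leL_iff_toLex_le {d : ℕ} {x y : CostP d} : leL x y ↔ toLex x ≤ toLex y := by
  rw [le_iff_eq_or_lt, toLex_inj]
  rfl

namespace MWGame

section Plays

variable {V : Type*} {d : ℕ} (G : MWGame V d)

lemma out_succ (σ₁ : G.Strat1) (σ₂ : G.Strat2) (v : V) (n : ℕ) :
    G.out σ₁ σ₂ v (n + 1) =
      if G.out σ₁ σ₂ v n ∈ G.V1 then
        σ₁.1 (G.outAux σ₁ σ₂ v n).1 (G.out σ₁ σ₂ v n)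
      else σ₂.1 (G.outAux σ₁ σ₂ v n).1 (G.out σ₁ σ₂ v n) :=
  rfl

lemma out_edge (σ₁ : G.Strat1) (σ₂ : G.Strat2) (v : V) (n : ℕ) :
    G.E (G.out σ₁ σ₂ v n) (G.out σ₁ σ₂ v (n + 1)) := by
  rw [out_succ]
  split_ifs with h
  · exact σ₁.2 _ _ h
  · exact σ₂.2 _ _ h

noncomputable def succWith (p : V → Prop) (v : V) : V :=
  if h : ∃ v', G.E v v' ∧ p v' then h.choose else (G.succ_nonempty v).choose

lemma edge_succWith (p : V → Prop) (v : V) : G.E v (G.succWith p v) := by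
  unfold succWith
  split_ifs with h
  · exact h.choose_spec.1
  · exact (G.succ_nonempty v).choose_spec

lemma succWith_spec {p : V → Prop} {v : V} (h : ∃ v', G.E v v' ∧ p v') :
    p (G.succWith p v) := by
  rw [succWith, dif_pos h]
  exact h.choose_spec.2

def pathCost (ρ : ℕ → V) (n : ℕ) : Fin d → ℕ :=
  ∑ m ∈ Finset.range n, G.w (ρ m) (ρ (m + 1))

lemma toLex_cost_of_reaches (ρ : ℕ → V) (hF : ∃ ℓ, ρ ℓ ∈ G.F) :
    toLex (G.cost ρ) = lexAdd (G.pathCost ρ (Nat.find hF)) (toLex 0) := by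
  rw [cost, dif_pos hF]
  congr 1
  funext i
  simp only [pathCost, Finset.sum_apply, Nat.cast_sum, ofLex_toLex]
  exact (add_zero _).symm

end Plays

section Value

variable {V : Type*} {d : ℕ} [Fintype V] (G : MWGame V d)

noncomputable def succs (v : V) : Finset V :=
  Finset.univ.filter (G.E v)

lemma mem_succs {v v' : V} : v' ∈ G.succs v ↔ G.E v v' := by
  simp [succs]

lemma succs_nonempty (v : V) : (G.succs v).Nonempty :=
  let ⟨v', hv'⟩ := G.succ_nonempty v
  ⟨v', G.mem_succs.mpr hv'⟩

noncomputable def bellman (f : V → Lex (CostP d)) (v : V) : Lex (CostP d) :=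
  if v ∈ G.F then toLex 0
  else if v ∈ G.V1 then
    (G.succs v).inf' (G.succs_nonempty v) fun v' => lexAdd (G.w v v') (f v')
  else (G.succs v).sup' (G.succs_nonempty v) fun v' => lexAdd (G.w v v') (f v')

variable {G}

lemma bellman_of_mem_F {f : V → Lex (CostP d)} {v : V} (hv : v ∈ G.F) :
    G.bellman f v = toLex 0 :=
  if_pos hv

lemma bellman_le_of_mem_V1 {f : V → Lex (CostP d)} {v v' : V} (hv : v ∉ G.F) (h1 : v ∈ G.V1)
    (hE : G.E v v') : G.bellman f v ≤ lexAdd (G.w v v') (f v') := by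
  rw [bellman, if_neg hv, if_pos h1]
  exact Finset.inf'_le _ (G.mem_succs.mpr hE)

lemma le_bellman_of_not_mem_V1 {f : V → Lex (CostP d)} {v v' : V} (hv : v ∉ G.F)
    (h1 : v ∉ G.V1) (hE : G.E v v') : lexAdd (G.w v v') (f v') ≤ G.bellman f v := by
  rw [bellman, if_neg hv, if_neg h1]
  exact Finset.le_sup' (fun v' => lexAdd (G.w v v') (f v')) (G.mem_succs.mpr hE)

lemma exists_bellman_eq {f : V → Lex (CostP d)} {v : V} (hv : v ∉ G.F) :
    ∃ v', G.E v v' ∧ G.bellman f v = lexAdd (G.w v v') (f v') := by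
  rw [bellman, if_neg hv]
  split_ifs
  · obtain ⟨v', hv', h⟩ := Finset.exists_mem_eq_inf' (G.succs_nonempty v)
      fun v' => lexAdd (G.w v v') (f v')
    exact ⟨v', G.mem_succs.mp hv', h⟩
  · obtain ⟨v', hv', h⟩ := Finset.exists_mem_eq_sup' (G.succs_nonempty v)
      fun v' => lexAdd (G.w v v') (f v')
    exact ⟨v', G.mem_succs.mp hv', h⟩

variable (G)

lemma bellman_mono : Monotone G.bellman := by
  intro f g hfg v
  by_cases hv : v ∈ G.F
  · rw [bellman_of_mem_F hv, bellman_of_mem_F hv]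
  by_cases h1 : v ∈ G.V1
  · obtain ⟨v', hE, heq⟩ := exists_bellman_eq (f := g) hv
    rw [heq]
    exact (bellman_le_of_mem_V1 hv h1 hE).trans ((strictMono_lexAdd _).monotone (hfg v'))
  · obtain ⟨v', hE, heq⟩ := exists_bellman_eq (f := f) hv
    rw [heq]
    exact ((strictMono_lexAdd _).monotone (hfg v')).trans (le_bellman_of_not_mem_V1 hv h1 hE)

noncomputable def valueIter : ℕ → V → Lex (CostP d)
  | 0 => fun v => if v ∈ G.F then toLex 0 else ⊤
  | k + 1 => G.bellman (valueIter k)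

lemma valueIter_antitone : Antitone G.valueIter := by
  refine antitone_nat_of_succ_le fun k => ?_
  induction k with
  | zero =>
    intro v
    by_cases hv : v ∈ G.F
    · simp only [valueIter, bellman_of_mem_F hv, if_pos hv, le_refl]
    · simp only [valueIter, if_neg hv, le_top]
  | succ k ih => exact G.bellman_mono ih

lemma exists_valueIter_stable : ∃ N, ∀ m, N ≤ m → G.valueIter N = G.valueIter m :=
  WellFoundedGT.monotone_chain_condition (α := (V → Lex (CostP d))ᵒᵈ)
    ⟨G.valueIter, G.valueIter_antitone⟩

noncomputable def value : V → Lex (CostP d) :=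
  G.valueIter G.exists_valueIter_stable.choose

lemma valueIter_eq_value {m : ℕ} (hm : G.exists_valueIter_stable.choose ≤ m) :
    G.valueIter m = G.value :=
  (G.exists_valueIter_stable.choose_spec m hm).symm

lemma value_le_valueIter (k : ℕ) : G.value ≤ G.valueIter k := by
  rw [← G.valueIter_eq_value (le_max_left _ k)]
  exact G.valueIter_antitone (le_max_right _ k)

lemma bellman_value : G.bellman G.value = G.value :=
  G.valueIter_eq_value (Nat.le_succ _)

lemma value_of_mem_F {v : V} (hv : v ∈ G.F) : G.value v = toLex 0 := by
  rw [← G.bellman_value, bellman_of_mem_F hv]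

noncomputable def rank (v : V) : ℕ :=
  Nat.find (⟨_, rfl⟩ : ∃ k, G.valueIter k v = G.value v)

lemma valueIter_rank (v : V) : G.valueIter (G.rank v) v = G.value v :=
  Nat.find_spec (⟨_, rfl⟩ : ∃ k, G.valueIter k v = G.value v)

lemma rank_le {v : V} {k : ℕ} (h : G.valueIter k v = G.value v) : G.rank v ≤ k :=
  Nat.find_min' _ h

lemma exists_rank_eq_succ {v : V} (hv : v ∉ G.F) (ht : G.value v ≠ ⊤) :
    ∃ k, G.rank v = k + 1 := by
  refine Nat.exists_eq_succ_of_ne_zero fun h0 => ht ?_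
  rw [← G.valueIter_rank, h0]
  simp [valueIter, hv]

lemma bellman_valueIter_of_rank_eq {v : V} {k : ℕ} (hk : G.rank v = k + 1) :
    G.bellman (G.valueIter k) v = G.value v := by
  rw [← G.valueIter_rank v, hk]
  rfl

lemma value_le_lexAdd_of_mem_V1 {v v' : V} (hv : v ∉ G.F) (h1 : v ∈ G.V1) (hE : G.E v v') :
    G.value v ≤ lexAdd (G.w v v') (G.value v') :=
  (congrFun G.bellman_value v).symm.trans_le (bellman_le_of_mem_V1 hv h1 hE)

lemma exists_value_eq_lexAdd {v : V} (hv : v ∉ G.F) :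
    ∃ v', G.E v v' ∧ G.value v = lexAdd (G.w v v') (G.value v') := by
  obtain ⟨v', hE, h⟩ := exists_bellman_eq (f := G.value) hv
  exact ⟨v', hE, (congrFun G.bellman_value v).symm.trans h⟩

def Descends (v v' : V) : Prop :=
  toLex (lexAdd (G.w v v') (G.value v'), G.rank v') < toLex (G.value v, G.rank v)

lemma descends_of_lexAdd_valueIter_le {v v' : V} {k : ℕ} (hk : G.rank v = k + 1)
    (h : lexAdd (G.w v v') (G.valueIter k v') ≤ G.value v) : G.Descends v v' := by
  rw [Descends, Prod.Lex.toLex_lt_toLex]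
  rcases (G.value_le_valueIter k v').eq_or_lt with heq | hlt
  · rw [← heq] at h
    rcases h.lt_or_eq with hlt' | heq'
    · exact Or.inl hlt'
    · exact Or.inr ⟨heq', (G.rank_le heq.symm).trans_lt (hk ▸ k.lt_succ_self)⟩
  · exact Or.inl ((strictMono_lexAdd _ hlt).trans_le h)

lemma exists_descends {v : V} (hv : v ∉ G.F) (ht : G.value v ≠ ⊤) :
    ∃ v', G.E v v' ∧ G.Descends v v' := by
  obtain ⟨k, hk⟩ := G.exists_rank_eq_succ hv ht
  obtain ⟨v', hE, heq⟩ := exists_bellman_eq (f := G.valueIter k) hv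
  exact ⟨v', hE, G.descends_of_lexAdd_valueIter_le hk
    (heq.symm.trans (G.bellman_valueIter_of_rank_eq hk)).le⟩

lemma descends_of_not_mem_V1 {v v' : V} (hv : v ∉ G.F) (h1 : v ∉ G.V1) (ht : G.value v ≠ ⊤)
    (hE : G.E v v') : G.Descends v v' := by
  obtain ⟨k, hk⟩ := G.exists_rank_eq_succ hv ht
  exact G.descends_of_lexAdd_valueIter_le hk
    ((le_bellman_of_not_mem_V1 hv h1 hE).trans_eq (G.bellman_valueIter_of_rank_eq hk))

noncomputable def potential (ρ : ℕ → V) (n : ℕ) : Lex (CostP d) :=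
  lexAdd (G.pathCost ρ n) (G.value (ρ n))

lemma potential_zero (ρ : ℕ → V) : G.potential ρ 0 = G.value (ρ 0) := by
  rw [potential, pathCost, Finset.sum_range_zero, lexAdd_zero]

lemma potential_succ (ρ : ℕ → V) (n : ℕ) :
    G.potential ρ (n + 1) =
      lexAdd (G.pathCost ρ n) (lexAdd (G.w (ρ n) (ρ (n + 1))) (G.value (ρ (n + 1)))) := by
  rw [potential, pathCost, Finset.sum_range_succ, lexAdd_add]
  rfl

lemma toLex_cost_eq_potential (ρ : ℕ → V) (hF : ∃ ℓ, ρ ℓ ∈ G.F) :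
    toLex (G.cost ρ) = G.potential ρ (Nat.find hF) := by
  rw [potential, G.value_of_mem_F (Nat.find_spec hF), toLex_cost_of_reaches]

lemma value_le_cost {ρ : ℕ → V}
    (hstep : ∀ n, ρ n ∉ G.F →
      G.value (ρ n) ≤ lexAdd (G.w (ρ n) (ρ (n + 1))) (G.value (ρ (n + 1)))) :
    G.value (ρ 0) ≤ toLex (G.cost ρ) := by
  by_cases hF : ∃ ℓ, ρ ℓ ∈ G.F
  swap
  · rw [cost, dif_neg hF]
    exact le_top
  have hinv : ∀ n, (∀ m < n, ρ m ∉ G.F) → G.value (ρ 0) ≤ G.potential ρ n := by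
    intro n
    induction n with
    | zero => exact fun _ => (G.potential_zero ρ).ge
    | succ n ih =>
      intro hnF
      rw [potential_succ]
      exact (ih fun m hm => hnF m (hm.trans n.lt_succ_self)).trans
        ((strictMono_lexAdd _).monotone (hstep n (hnF n n.lt_succ_self)))
  rw [G.toLex_cost_eq_potential ρ hF]
  exact hinv _ fun m => Nat.find_min hF

lemma potential_rank_lt_of_descends {ρ : ℕ → V} {n : ℕ}
    (h : G.Descends (ρ n) (ρ (n + 1))) :
    toLex (G.potential ρ (n + 1), G.rank (ρ (n + 1))) <
      toLex (G.potential ρ n, G.rank (ρ n)) := by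
  rw [Descends, Prod.Lex.toLex_lt_toLex] at h
  rw [Prod.Lex.toLex_lt_toLex, potential_succ, potential]
  rcases h with hlt | ⟨heq, hrank⟩
  · exact Or.inl (strictMono_lexAdd _ hlt)
  · exact Or.inr ⟨congrArg (lexAdd _) heq, hrank⟩

lemma cost_le_value {ρ : ℕ → V}
    (hstep : ∀ n, ρ n ∉ G.F → G.value (ρ n) ≠ ⊤ → G.Descends (ρ n) (ρ (n + 1))) :
    toLex (G.cost ρ) ≤ G.value (ρ 0) := by
  rcases eq_or_ne (G.value (ρ 0)) ⊤ with htop | htop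
  · rw [htop]
    exact le_top
  let μ : ℕ → Lex (Lex (CostP d) × ℕ) := fun n => toLex (G.potential ρ n, G.rank (ρ n))
  have hdesc : ∀ n, ρ n ∉ G.F → G.potential ρ n ≤ G.value (ρ 0) → μ (n + 1) < μ n :=
    fun n hn hle => G.potential_rank_lt_of_descends (hstep n hn (ne_top_of_lexAdd_le hle htop))
  have hinv : ∀ n, (∀ m < n, ρ m ∉ G.F) → G.potential ρ n ≤ G.value (ρ 0) := by
    intro n
    induction n with
    | zero => exact fun _ => (G.potential_zero ρ).le
    | succ n ih =>
      intro hnF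
      have hle := ih fun m hm => hnF m (hm.trans n.lt_succ_self)
      exact (Prod.Lex.monotone_fst _ _ (hdesc n (hnF n n.lt_succ_self) hle).le).trans hle
  have hF : ∃ ℓ, ρ ℓ ∈ G.F := by
    by_contra! hF
    obtain ⟨n, hn⟩ := WellFounded.not_rel_apply_succ (r := (· < ·)) μ
    exact hn (hdesc n (hF n) (hinv n fun m _ => hF m))
  rw [G.toLex_cost_eq_potential ρ hF]
  exact hinv _ fun m => Nat.find_min hF

noncomputable def optStrat1 : G.Strat1 :=
  ⟨fun _ v => G.succWith (G.Descends v) v, fun _ v _ => G.edge_succWith _ v⟩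

noncomputable def optStrat2 : G.Strat2 :=
  ⟨fun _ v => G.succWith (fun v' => G.value v ≤ lexAdd (G.w v v') (G.value v')) v,
    fun _ v _ => G.edge_succWith _ v⟩

lemma value_le_cost_out_optStrat2 (σ₁ : G.Strat1) (v : V) :
    G.value v ≤ toLex (G.cost (G.out σ₁ G.optStrat2 v)) := by
  refine G.value_le_cost (ρ := G.out σ₁ G.optStrat2 v) fun n hn => ?_
  rw [out_succ]
  split_ifs with h1
  · exact G.value_le_lexAdd_of_mem_V1 hn h1 (σ₁.2 _ _ h1)
  · obtain ⟨v', hE, heq⟩ := G.exists_value_eq_lexAdd hn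
    exact G.succWith_spec (p := fun v' => G.value _ ≤ lexAdd (G.w _ v') (G.value v'))
      ⟨v', hE, heq.le⟩

lemma value_le_of_mem_Ensure {v : V} {x : CostP d} (hx : x ∈ G.Ensure leL v) :
    G.value v ≤ toLex x := by
  obtain ⟨σ₁, hσ₁⟩ := hx
  exact (G.value_le_cost_out_optStrat2 σ₁ v).trans (leL_iff_toLex_le.mp (hσ₁ _))

lemma cost_out_optStrat1_le_value (σ₂ : G.Strat2) (v : V) :
    toLex (G.cost (G.out G.optStrat1 σ₂ v)) ≤ G.value v := by
  refine G.cost_le_value (ρ := G.out G.optStrat1 σ₂ v) fun n hn htop => ?_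
  by_cases h1 : G.out G.optStrat1 σ₂ v n ∈ G.V1
  · rw [out_succ, if_pos h1]
    exact G.succWith_spec (G.exists_descends hn htop)
  · exact G.descends_of_not_mem_V1 hn h1 htop (G.out_edge _ _ _ n)

end Value

end MWGame

theorem stmt12_general {V : Type*} [Fintype V] {d : ℕ} (G : MWGame V d)
    (u : V) (c : CostP d)
    (hc : c ∈ minimalSet leL (G.Ensure leL u)) :
    ∃ σ₁ : G.Strat1, (∀ h h' z, σ₁.1 h z = σ₁.1 h' z) ∧
      ∀ σ₂ : G.Strat2, leL (G.cost (G.out σ₁ σ₂ u)) c :=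
  ⟨G.optStrat1, fun _ _ _ => rfl, fun σ₂ => leL_iff_toLex_le.mpr
    ((G.cost_out_optStrat1_le_value σ₂ u).trans (G.value_le_of_mem_Ensure hc.1))⟩

/-- For the lexicographic order, if `c ∈ minimal(Ensure(u))` and
`c ≠ (∞,…,∞)`, then Player 1 has a *positional* strategy from `u` ensuring `c`. -/
theorem stmt12 {V : Type*} [Fintype V] {d : ℕ} (hd : 1 ≤ d) (G : MWGame V d)
    (u : V) (c : CostP d)
    (hc : c ∈ minimalSet leL (G.Ensure leL u)) (hcne : c ≠ ⊤) :
    ∃ σ₁ : G.Strat1, (∀ h h' z, σ₁.1 h z = σ₁.1 h' z) ∧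
      ∀ σ₂ : G.Strat2, leL (G.cost (G.out σ₁ σ₂ u)) c :=
  stmt12_general G u c hc
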